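/- Let ρ be a probability measure on ℝ^d, let φ : ℝ^d × ℝ^d → ℝ be measurable with |φ(x,ω)| ≤ 1 for all x and ω, let α ∈ L²(ρ), and define f(x) = ∫ α(ω) φ(x,ω) dρ(ω) and ‖f‖_ρ = (∫ α(ω)² dρ(ω))^{1/2}. Fix x ∈ ℝ^d, N ≥ 1, and δ ∈ (0,1). Set T = √N · ‖f‖_ρ and define the truncation α_{≤T}(ω) = α(ω)·1_{|α(ω)| ≤ T}. Then, with probability at least 1 − δ over ω₁,…,ω_N drawn i.i.d. from ρ, the function f^♯(x) = (1/N) ∑_{k=1}^N α_{≤T}(ω_k) φ(x,ω_k) satisfies |f(x) − f^♯(x)| ≤ 12 ‖f‖_ρ log(2/δ) / √N. In particular, there exist coefficients c₁^♯,…,c_N^♯ ∈ ℝ such that ∑_{k=1}^N c_k^♯ φ(x,ω_k) approximates f(x) to accuracy 12 ‖f‖_ρ log(2/δ)/√N with probability at least 1 − δ. -/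

import Mathlib

/-!
Put `g = α_{≤T} · φ(x, ·)` with `T = √N ‖f‖_ρ`. Truncation costs a bias
`|f(x) - E g| ≤ E[α² 1_{|α| > T}] / T ≤ ‖f‖_ρ / √N`. The centred variable `g - E g` is bounded
by `2T` and has variance at most `‖f‖_ρ²`, so the Chernoff bound, combined with
`exp u ≤ 1 + u + u²` for `|u| ≤ 1` at `t = 1 / (2T)`, gives a Bernstein-type tail: the empirical
mean of `g` deviates from `E g` by `(12 log(2/δ) - 1) ‖f‖_ρ / √N` with probability at most
`2 exp (1/4 - (12 log(2/δ) - 1) / 2) ≤ δ`. Adding the bias gives the bound.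
-/

open MeasureTheory ProbabilityTheory Real

noncomputable def truncate (T a : ℝ) : ℝ := if |a| ≤ T then a else 0

lemma measurable_truncate (T : ℝ) : Measurable (truncate T) :=
  Measurable.ite (measurableSet_le measurable_id.abs measurable_const) measurable_id
    measurable_const

lemma truncate_zero (a : ℝ) : truncate 0 a = 0 := by
  unfold truncate
  split_ifs with h
  · exact abs_nonpos_iff.1 h
  · rfl

lemma abs_truncate_le_abs (T a : ℝ) : |truncate T a| ≤ |a| := by
  unfold truncate
  split_ifs <;> simp

lemma abs_truncate_le {T : ℝ} (hT : 0 ≤ T) (a : ℝ) : |truncate T a| ≤ T := by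
  unfold truncate
  split_ifs with h
  · exact h
  · simpa using hT

lemma abs_sub_truncate_le {T : ℝ} (hT : 0 < T) (a : ℝ) : |a - truncate T a| ≤ a ^ 2 / T := by
  unfold truncate
  split_ifs with h
  · rw [sub_self, abs_zero]
    positivity
  · rw [sub_zero, le_div_iff₀ hT, ← sq_abs, sq]
    exact mul_le_mul_of_nonneg_left (not_le.1 h).le (abs_nonneg a)

lemma two_mul_exp_three_quarters_sub_six_mul_log_le {δ : ℝ} (hδ0 : 0 < δ) (hδ1 : δ ≤ 1) :
    2 * exp (3 / 4 - 6 * log (2 / δ)) ≤ δ := by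
  have hlog : log 2 ≤ log (2 / δ) := log_le_log two_pos (le_div_self two_pos.le hδ0 hδ1)
  calc 2 * exp (3 / 4 - 6 * log (2 / δ)) ≤ 2 * exp (-log (2 / δ)) := by
        gcongr
        linarith [log_two_gt_d9]
    _ = δ := by
        rw [exp_neg, exp_log (by positivity)]
        field_simp

section

variable {Ω : Type*} [MeasurableSpace Ω] {μ : Measure Ω}

lemma MeasureTheory.AEStronglyMeasurable.truncate {a : Ω → ℝ} (ha : AEStronglyMeasurable a μ)
    (T : ℝ) : AEStronglyMeasurable (fun ω => truncate T (a ω)) μ :=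
  ((measurable_truncate T).comp_aemeasurable ha.aemeasurable).aestronglyMeasurable

lemma ofReal_one_sub_le_measure_of_measure_compl_le [IsProbabilityMeasure μ] {s : Set Ω} {δ : ℝ}
    (hδ : 0 ≤ δ) (h : μ sᶜ ≤ ENNReal.ofReal δ) : ENNReal.ofReal (1 - δ) ≤ μ s := by
  rw [ENNReal.ofReal_sub _ hδ, ENNReal.ofReal_one, tsub_le_iff_right]
  calc 1 = μ Set.univ := measure_univ.symm
    _ ≤ μ s + μ sᶜ := measure_univ_le_add_compl s
    _ ≤ μ s + ENNReal.ofReal δ := by gcongr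

lemma integrable_exp_mul_of_ae_abs_le [IsFiniteMeasure μ] {X : Ω → ℝ} {c : ℝ}
    (hXm : AEStronglyMeasurable X μ) (hXc : ∀ᵐ ω ∂μ, |X ω| ≤ c) (t : ℝ) :
    Integrable (fun ω => exp (t * X ω)) μ := by
  refine .of_bound
    (measurable_exp.comp_aemeasurable (hXm.aemeasurable.const_mul t)).aestronglyMeasurable
    (exp (|t| * c)) (hXc.mono fun ω hω => ?_)
  rw [norm_of_nonneg (exp_pos _).le, exp_le_exp]
  calc t * X ω ≤ |t * X ω| := le_abs_self _
    _ = |t| * |X ω| := abs_mul _ _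
    _ ≤ |t| * c := mul_le_mul_of_nonneg_left hω (abs_nonneg t)

lemma mgf_le_exp_sq_mul_integral_sq [IsProbabilityMeasure μ] {X : Ω → ℝ} {c t : ℝ}
    (hXm : AEStronglyMeasurable X μ) (hXc : ∀ᵐ ω ∂μ, |X ω| ≤ c) (hX0 : μ[X] = 0)
    (ht : 0 ≤ t) (htc : t * c ≤ 1) :
    mgf X μ t ≤ exp (t ^ 2 * ∫ ω, X ω ^ 2 ∂μ) := by
  have hX : Integrable X μ := .of_bound hXm c (by simpa using hXc)
  have hX2 : Integrable (fun ω => X ω ^ 2) μ :=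
    .of_bound (hXm.pow 2) (c ^ 2) (hXc.mono fun ω hω => by
      rw [norm_pow, norm_eq_abs]
      exact pow_le_pow_left₀ (abs_nonneg _) hω 2)
  calc mgf X μ t ≤ ∫ ω, (1 + t * X ω + t ^ 2 * X ω ^ 2) ∂μ := by
        refine integral_mono_ae (integrable_exp_mul_of_ae_abs_le hXm hXc t)
          (((integrable_const 1).add (hX.const_mul t)).add (hX2.const_mul _))
          (hXc.mono fun ω hω => ?_)
        have htX : |t * X ω| ≤ 1 := by
          rw [abs_mul, abs_of_nonneg ht]
          exact (mul_le_mul_of_nonneg_left hω ht).trans htc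
        linarith [(abs_le.1 (abs_exp_sub_one_sub_id_le htX)).2]
    _ = 1 + t ^ 2 * ∫ ω, X ω ^ 2 ∂μ := by
        have h1 : Integrable (fun ω => 1 + t * X ω) μ := (integrable_const 1).add (hX.const_mul t)
        rw [integral_add h1 (hX2.const_mul _), integral_add (integrable_const 1) (hX.const_mul t),
          integral_const_mul, integral_const_mul, hX0]
        simp
    _ ≤ exp (t ^ 2 * ∫ ω, X ω ^ 2 ∂μ) := by linarith [add_one_le_exp (t ^ 2 * ∫ ω, X ω ^ 2 ∂μ)]

variable {ι : Type*} [Fintype ι]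

lemma mgf_sum_pi_eq_pow [SigmaFinite μ] (X : Ω → ℝ) (t : ℝ) :
    mgf (fun w : ι → Ω => ∑ i, X (w i)) (Measure.pi fun _ => μ) t
      = mgf X μ t ^ Fintype.card ι := by
  simp only [mgf, Finset.mul_sum, exp_sum]
  convert integral_fintype_prod_eq_pow (ι := ι) (μ := μ) fun ω => exp (t * X ω) using 0

lemma integrable_exp_mul_sum_pi [SigmaFinite μ] {X : Ω → ℝ} {t : ℝ}
    (h : Integrable (fun ω => exp (t * X ω)) μ) :
    Integrable (fun w : ι → Ω => exp (t * ∑ i, X (w i))) (Measure.pi fun _ => μ) := by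
  simp only [Finset.mul_sum, exp_sum]
  exact Integrable.fintype_prod fun _ => h

lemma measureReal_sum_pi_ge_le [IsProbabilityMeasure μ] {X : Ω → ℝ} {c t : ℝ}
    (hXm : AEStronglyMeasurable X μ) (hXc : ∀ᵐ ω ∂μ, |X ω| ≤ c) (hX0 : μ[X] = 0)
    (ht : 0 ≤ t) (htc : t * c ≤ 1) (ε : ℝ) :
    (Measure.pi fun _ : ι => μ).real {w | ε ≤ ∑ i, X (w i)}
      ≤ exp (Fintype.card ι * (t ^ 2 * ∫ ω, X ω ^ 2 ∂μ) - t * ε) :=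
  calc _ ≤ exp (-t * ε) * mgf (fun w : ι → Ω => ∑ i, X (w i)) (Measure.pi fun _ => μ) t :=
        measure_ge_le_exp_mul_mgf ε ht
          (integrable_exp_mul_sum_pi (integrable_exp_mul_of_ae_abs_le hXm hXc t))
    _ ≤ exp (-t * ε) * exp (t ^ 2 * ∫ ω, X ω ^ 2 ∂μ) ^ Fintype.card ι := by
        rw [mgf_sum_pi_eq_pow]
        gcongr
        · exact mgf_nonneg
        · exact mgf_le_exp_sq_mul_integral_sq hXm hXc hX0 ht htc
    _ = _ := by
        rw [← exp_nat_mul, ← exp_add]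
        ring_nf

lemma measureReal_abs_sum_sub_pi_ge_le [IsProbabilityMeasure μ] {X : Ω → ℝ} {c t : ℝ}
    (hXm : AEStronglyMeasurable X μ) (hXc : ∀ᵐ ω ∂μ, |X ω| ≤ c)
    (ht : 0 ≤ t) (htc : t * (2 * c) ≤ 1) (ε : ℝ) :
    (Measure.pi fun _ : ι => μ).real {w | ε ≤ |∑ i, X (w i) - Fintype.card ι * μ[X]|}
      ≤ 2 * exp (Fintype.card ι * (t ^ 2 * Var[X; μ]) - t * ε) := by
  set m := μ[X]
  have hX : Integrable X μ := .of_bound hXm c (by simpa using hXc)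
  have hm : |m| ≤ c := by
    simpa using norm_integral_le_of_norm_le_const (μ := μ) (f := X) (by simpa using hXc)
  have hXc' : ∀ᵐ ω ∂μ, |X ω - m| ≤ 2 * c :=
    hXc.mono fun ω hω => (abs_sub _ _).trans (by linarith)
  have hvar : Var[X; μ] = ∫ ω, (X ω - m) ^ 2 ∂μ := variance_eq_integral hXm.aemeasurable
  have hvar' : Var[X; μ] = ∫ ω, (m - X ω) ^ 2 ∂μ := by
    rw [hvar]
    congr 1 with ω
    ring
  have upper := measureReal_sum_pi_ge_le (ι := ι) (X := fun ω => X ω - m)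
    (hXm.sub aestronglyMeasurable_const) hXc'
    (by rw [integral_sub hX (integrable_const m)]; simp [m]) ht htc ε
  have lower := measureReal_sum_pi_ge_le (ι := ι) (X := fun ω => m - X ω)
    (aestronglyMeasurable_const.sub hXm) (by simpa only [abs_sub_comm] using hXc')
    (by rw [integral_sub (integrable_const m) hX]; simp [m]) ht htc ε
  simp only [Finset.sum_sub_distrib, Finset.sum_const, Finset.card_univ, nsmul_eq_mul, ← hvar,
    ← hvar'] at upper lower
  calc (Measure.pi fun _ : ι => μ).real {w | ε ≤ |∑ i, X (w i) - Fintype.card ι * m|}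
      ≤ (Measure.pi fun _ : ι => μ).real
        ({w | ε ≤ ∑ i, X (w i) - Fintype.card ι * m}
          ∪ {w | ε ≤ Fintype.card ι * m - ∑ i, X (w i)}) :=
        measureReal_mono fun w (hw : ε ≤ |_|) => by
          simpa only [Set.mem_union, Set.mem_ofPred_eq, neg_sub] using le_abs.1 hw
    _ ≤ _ := (measureReal_union_le _ _).trans (by linarith)

lemma abs_integral_mul_sub_integral_truncate_mul_le [IsFiniteMeasure μ] {a ψ : Ω → ℝ}
    (ha : MemLp a 2 μ) (hψm : AEStronglyMeasurable ψ μ) (hψ : ∀ᵐ ω ∂μ, |ψ ω| ≤ 1)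
    {T : ℝ} (hT : 0 < T) :
    |∫ ω, a ω * ψ ω ∂μ - ∫ ω, truncate T (a ω) * ψ ω ∂μ| ≤ (∫ ω, a ω ^ 2 ∂μ) / T := by
  have hψ' : ∀ᵐ ω ∂μ, ‖ψ ω‖ ≤ 1 := by simpa using hψ
  have hint : Integrable (fun ω => a ω * ψ ω) μ := (ha.integrable one_le_two).mul_bdd hψm hψ'
  have hint_trunc : Integrable (fun ω => truncate T (a ω) * ψ ω) μ :=
    (Integrable.of_bound (ha.aestronglyMeasurable.truncate T) T
      (.of_forall fun ω => by simpa using abs_truncate_le hT.le (a ω))).mul_bdd hψm hψ'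
  rw [← integral_sub hint hint_trunc, ← integral_div]
  refine abs_integral_le_integral_abs.trans <| integral_mono_ae (hint.sub hint_trunc).abs
    (ha.integrable_sq.div_const T) (hψ.mono fun ω hω => ?_)
  dsimp only
  rw [← sub_mul, abs_mul]
  exact (mul_le_of_le_one_right (abs_nonneg _) hω).trans (abs_sub_truncate_le hT _)

lemma variance_truncate_mul_le [IsProbabilityMeasure μ] {a ψ : Ω → ℝ} (ha : MemLp a 2 μ)
    (hψm : AEStronglyMeasurable ψ μ) (hψ : ∀ᵐ ω ∂μ, |ψ ω| ≤ 1) (T : ℝ) :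
    Var[fun ω => truncate T (a ω) * ψ ω; μ] ≤ ∫ ω, a ω ^ 2 ∂μ := by
  refine (variance_le_expectation_sq ((ha.aestronglyMeasurable.truncate T).mul hψm)).trans <|
    integral_mono_of_nonneg (.of_forall fun ω => sq_nonneg _) ha.integrable_sq
      (hψ.mono fun ω hω => ?_)
  rw [Pi.pow_apply, Pi.mul_apply, sq_le_sq, abs_mul]
  exact (mul_le_of_le_one_right (abs_nonneg _) hω).trans (abs_truncate_le_abs T (a ω))

variable [IsProbabilityMeasure μ] {a ψ : Ω → ℝ} {σ δ : ℝ} {N : ℕ}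

lemma measureReal_abs_sum_truncate_mul_sub_ge_le (ha : MemLp a 2 μ)
    (hψm : AEStronglyMeasurable ψ μ) (hψ : ∀ᵐ ω ∂μ, |ψ ω| ≤ 1) (hσ : 0 < σ)
    (haσ : ∫ ω, a ω ^ 2 ∂μ ≤ σ ^ 2) (hN : 1 ≤ N) (hδ0 : 0 < δ) (hδ1 : δ ≤ 1) :
    (Measure.pi fun _ : Fin N => μ).real
      {w | (12 * log (2 / δ) - 1) * σ * √N ≤
        |∑ k, truncate (√N * σ) (a (w k)) * ψ (w k)
          - N * ∫ ω, truncate (√N * σ) (a ω) * ψ ω ∂μ|} ≤ δ := by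
  set T := √N * σ
  set g := fun ω => truncate T (a ω) * ψ ω
  set L := log (2 / δ)
  have hNpos : (0 : ℝ) < N := by exact_mod_cast hN
  have hT : 0 < T := mul_pos (sqrt_pos.2 hNpos) hσ
  have hT2 : T ^ 2 = N * σ ^ 2 := by rw [mul_pow, sq_sqrt hNpos.le]
  have hgc : ∀ᵐ ω ∂μ, |g ω| ≤ T := hψ.mono fun ω hω => by
    simpa [g, abs_mul] using mul_le_mul (abs_truncate_le hT.le (a ω)) hω (abs_nonneg _) hT.le
  have hvar : Var[g; μ] ≤ σ ^ 2 := (variance_truncate_mul_le ha hψm hψ T).trans haσ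
  have hexp : N * ((1 / (2 * T)) ^ 2 * Var[g; μ]) - 1 / (2 * T) * ((12 * L - 1) * σ * √N)
      ≤ 3 / 4 - 6 * L := by
    have hvar_term : N * ((1 / (2 * T)) ^ 2 * Var[g; μ]) ≤ 1 / 4 := by
      calc N * ((1 / (2 * T)) ^ 2 * Var[g; μ]) ≤ N * ((1 / (2 * T)) ^ 2 * σ ^ 2) := by gcongr
        _ = 1 / 4 := by field_simp; rw [hT2]; ring
    have hmean_term : 1 / (2 * T) * ((12 * L - 1) * σ * √N) = (12 * L - 1) / 2 := by
      field_simp [T]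
      ring
    linarith
  calc _ ≤ 2 * exp (N * ((1 / (2 * T)) ^ 2 * Var[g; μ])
          - 1 / (2 * T) * ((12 * L - 1) * σ * √N)) := by
        simpa only [Fintype.card_fin] using measureReal_abs_sum_sub_pi_ge_le (ι := Fin N) (X := g)
          (t := 1 / (2 * T)) ((ha.aestronglyMeasurable.truncate T).mul hψm) hgc (by positivity)
          (one_div_mul_cancel (by positivity)).le ((12 * L - 1) * σ * √N)
    _ ≤ 2 * exp (3 / 4 - 6 * L) := by gcongr
    _ ≤ δ := two_mul_exp_three_quarters_sub_six_mul_log_le hδ0 hδ1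

lemma measure_abs_integral_mul_sub_truncated_mean_gt_le (ha : MemLp a 2 μ)
    (hψm : AEStronglyMeasurable ψ μ) (hψ : ∀ᵐ ω ∂μ, |ψ ω| ≤ 1) (hσ : 0 ≤ σ)
    (haσ : ∫ ω, a ω ^ 2 ∂μ ≤ σ ^ 2) (hN : 1 ≤ N) (hδ0 : 0 < δ) (hδ1 : δ ≤ 1) :
    (Measure.pi fun _ : Fin N => μ)
      {w | 12 * σ * log (2 / δ) / √N <
        |∫ ω, a ω * ψ ω ∂μ - (1 / (N : ℝ)) * ∑ k, truncate (√N * σ) (a (w k)) * ψ (w k)|}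
      ≤ ENNReal.ofReal δ := by
  rcases hσ.eq_or_lt with rfl | hσ
  · have ha0 : ∀ᵐ ω ∂μ, a ω = 0 := by
      have h0 : ∫ ω, a ω ^ 2 ∂μ = 0 :=
        le_antisymm (by simpa using haσ) (integral_nonneg fun ω => sq_nonneg _)
      filter_upwards [(integral_eq_zero_iff_of_nonneg (fun ω => sq_nonneg (a ω))
        ha.integrable_sq).1 h0] with ω hω using pow_eq_zero_iff two_ne_zero |>.1 hω
    have hf0 : ∫ ω, a ω * ψ ω ∂μ = 0 :=
      integral_eq_zero_of_ae (ha0.mono fun ω hω => by simp [hω])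
    simp [hf0, truncate_zero]
  set T := √N * σ
  set g := fun ω => truncate T (a ω) * ψ ω
  set m := ∫ ω, g ω ∂μ
  have hNpos : (0 : ℝ) < N := by exact_mod_cast hN
  have hT : 0 < T := mul_pos (sqrt_pos.2 hNpos) hσ
  have hbias : |∫ ω, a ω * ψ ω ∂μ - m| ≤ σ / √N :=
    calc _ ≤ (∫ ω, a ω ^ 2 ∂μ) / T :=
          abs_integral_mul_sub_integral_truncate_mul_le ha hψm hψ hT
      _ ≤ σ ^ 2 / T := by gcongr
      _ = σ / √N := by
          simp only [T]
          field_simp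
  have hsub : {w : Fin N → Ω | 12 * σ * log (2 / δ) / √N <
        |∫ ω, a ω * ψ ω ∂μ - (1 / (N : ℝ)) * ∑ k, g (w k)|} ⊆
      {w | (12 * log (2 / δ) - 1) * σ * √N ≤ |∑ k, g (w k) - N * m|} := by
    intro w hw
    rw [Set.mem_ofPred_eq] at hw ⊢
    have hdev : |∑ k, g (w k) - N * m| = N * |m - (1 / (N : ℝ)) * ∑ k, g (w k)| := by
      rw [← abs_of_pos hNpos, ← abs_mul, abs_sub_comm, abs_of_pos hNpos]
      congr 1
      field_simp
    rw [hdev]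
    have htri := abs_sub_le (∫ ω, a ω * ψ ω ∂μ) m ((1 / (N : ℝ)) * ∑ k, g (w k))
    calc (12 * log (2 / δ) - 1) * σ * √N
        = N * (12 * σ * log (2 / δ) / √N - σ / √N) := by
          field_simp
          rw [sq_sqrt hNpos.le]
      _ ≤ N * |m - (1 / (N : ℝ)) * ∑ k, g (w k)| := by gcongr; linarith
  calc _ ≤ (Measure.pi fun _ : Fin N => μ) _ := measure_mono hsub
    _ = ENNReal.ofReal ((Measure.pi fun _ : Fin N => μ).real _) := (ofReal_measureReal).symm
    _ ≤ ENNReal.ofReal δ := ENNReal.ofReal_le_ofReal <|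
      measureReal_abs_sum_truncate_mul_sub_ge_le ha hψm hψ hσ haσ hN hδ0 hδ1

end

/-- Random feature approximation (Theorem 2 of the paper): with truncation level
`T = √N ⬝ ‖f‖_ρ`, the truncated Monte Carlo random feature estimator approximates
`f(x)` to accuracy `12 ‖f‖_ρ log(2/δ) / √N` with probability at least `1 - δ`
over i.i.d. samples `ω₁, …, ω_N ∼ ρ`. -/
theorem random_feature_approximation
    {d : ℕ} (ρ : Measure (Fin d → ℝ)) [IsProbabilityMeasure ρ]
    (φ : (Fin d → ℝ) → (Fin d → ℝ) → ℝ)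
    (hφmeas : Measurable (Function.uncurry φ))
    (hφbd : ∀ x ω, |φ x ω| ≤ 1)
    (α : (Fin d → ℝ) → ℝ) (hα : MemLp α 2 ρ)
    (f : (Fin d → ℝ) → ℝ)
    (hf : ∀ x, f x = ∫ ω, α ω * φ x ω ∂ρ)
    (nf : ℝ) (hnf : nf = Real.sqrt (∫ ω, (α ω) ^ 2 ∂ρ))
    (x : Fin d → ℝ) (N : ℕ) (hN : 1 ≤ N)
    (δ : ℝ) (hδ : δ ∈ Set.Ioo (0 : ℝ) 1)
    (T : ℝ) (hT : T = Real.sqrt N * nf) :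
    ENNReal.ofReal (1 - δ) ≤
      (Measure.pi fun _ : Fin N => ρ)
        {w : Fin N → (Fin d → ℝ) |
          |f x - (1 / (N : ℝ)) * ∑ k : Fin N,
              (if |α (w k)| ≤ T then α (w k) else 0) * φ x (w k)|
            ≤ 12 * nf * Real.log (2 / δ) / Real.sqrt N} := by
  obtain ⟨hδ0, hδ1⟩ := hδ
  subst hnf hT
  rw [hf x]
  refine ofReal_one_sub_le_measure_of_measure_compl_le hδ0.le <| (measure_mono ?_).trans <|
    measure_abs_integral_mul_sub_truncated_mean_gt_le (ψ := φ x) hα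
      (hφmeas.comp measurable_prodMk_left).aestronglyMeasurable (.of_forall (hφbd x))
      (sqrt_nonneg _) (sq_sqrt (integral_nonneg fun ω => sq_nonneg (α ω))).ge hN hδ0 hδ1.le
  intro w hw
  rw [Set.mem_compl_iff, Set.mem_ofPred_eq, not_le] at hw
  exact hw
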